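/- Let B be an m×n matrix, M an m×m SPD matrix, and A₁ an n×n SPD matrix such that uᵀBᵀM⁻¹Bu ≤ C_K · uᵀA₁u for all u ∈ ℝⁿ (a discrete Korn-type inequality) and pᵀBA₁⁻¹Bᵀp ≥ β²pᵀMp for all p ⊥ Null(Bᵀ) (inf-sup). Then the eigenvalues of (M restricted to Null(Bᵀ)^⊥)⁻¹(BA₁⁻¹Bᵀ restricted to Null(Bᵀ)^⊥) lie in [β², C_K]; i.e., β² pᵀMp ≤ pᵀBA₁⁻¹Bᵀp ≤ C_K pᵀMp for all p ⊥ Null(Bᵀ). -/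

import Mathlib

open Matrix

/-!
The lower bound is the inf-sup hypothesis. For the upper bound put `v = Bᵀp`, `u = A₁⁻¹v` and
`s = pᵀBA₁⁻¹Bᵀp = vᵀA₁⁻¹v = uᵀA₁u = pᵀBu`. Cauchy–Schwarz in the `M`-inner product and the Korn
inequality give `s² ≤ (pᵀMp)(uᵀBᵀM⁻¹Bu) ≤ C_K (pᵀMp) s`; if `v ≠ 0` then `s > 0` and we divide,
and if `v = 0` then `p ⊥ Null(Bᵀ)` forces `p = 0`.
-/

variable {ι κ : Type*} [Fintype ι] [Fintype κ]

theorem Matrix.dotProduct_mul_mul_transpose_mulVec {R : Type*} [CommSemiring R]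
    (B : Matrix ι κ R) (N : Matrix κ κ R) (x : ι → R) :
    x ⬝ᵥ ((B * N * Bᵀ) *ᵥ x) = (Bᵀ *ᵥ x) ⬝ᵥ (N *ᵥ (Bᵀ *ᵥ x)) := by
  rw [← mulVec_mulVec, ← mulVec_mulVec, dotProduct_mulVec, mulVec_transpose]

theorem Matrix.PosSemidef.sq_dotProduct_mulVec_le {N : Matrix ι ι ℝ} (hN : N.PosSemidef)
    (x y : ι → ℝ) : (x ⬝ᵥ (N *ᵥ y)) ^ 2 ≤ (x ⬝ᵥ (N *ᵥ x)) * (y ⬝ᵥ (N *ᵥ y)) := by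
  classical
  have hnonneg (z : ι → ℝ) : 0 ≤ toBilin' N z z := by
    simpa [toBilin'_apply'] using hN.dotProduct_mulVec_nonneg z
  have hsymm : LinearMap.IsSymm (toBilin' N) := LinearMap.BilinForm.isSymm_iff.mp
    (isSymm_toBilin'_iff_isSymm.mpr (isHermitian_iff_isSymm.mp hN.1))
  simpa only [toBilin'_apply'] using
    LinearMap.BilinForm.apply_sq_le_of_symm _ hnonneg hsymm x y

theorem Matrix.PosDef.sq_dotProduct_le [DecidableEq ι] {M : Matrix ι ι ℝ} (hM : M.PosDef)
    (p w : ι → ℝ) : (p ⬝ᵥ w) ^ 2 ≤ (p ⬝ᵥ (M *ᵥ p)) * (w ⬝ᵥ (M⁻¹ *ᵥ w)) := by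
  have hMM : M * M⁻¹ = 1 := mul_nonsing_inv M (isUnit_iff_ne_zero.mpr hM.det_pos.ne')
  simpa [mulVec_mulVec, hMM, dotProduct_comm (M⁻¹ *ᵥ w) w] using
    hM.posSemidef.sq_dotProduct_mulVec_le p (M⁻¹ *ᵥ w)

theorem dotProduct_schur_le_of_korn [DecidableEq ι] [DecidableEq κ] (B : Matrix ι κ ℝ)
    {M : Matrix ι ι ℝ} {A : Matrix κ κ ℝ} (hM : M.PosDef) (hA : A.PosDef) {CK : ℝ}
    (hKorn : ∀ u, u ⬝ᵥ ((Bᵀ * M⁻¹ * B) *ᵥ u) ≤ CK * (u ⬝ᵥ (A *ᵥ u)))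
    {p : ι → ℝ} (hp : Bᵀ *ᵥ p ≠ 0) :
    p ⬝ᵥ ((B * A⁻¹ * Bᵀ) *ᵥ p) ≤ CK * (p ⬝ᵥ (M *ᵥ p)) := by
  set v := Bᵀ *ᵥ p
  set u := A⁻¹ *ᵥ v
  set s := p ⬝ᵥ ((B * A⁻¹ * Bᵀ) *ᵥ p)
  have hAu : A *ᵥ u = v := by
    rw [mulVec_mulVec, mul_nonsing_inv A (isUnit_iff_ne_zero.mpr hA.det_pos.ne'), one_mulVec]
  have hs : s = v ⬝ᵥ u := dotProduct_mul_mul_transpose_mulVec B A⁻¹ p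
  have hs_pos : 0 < s := hs ▸ hA.inv.dotProduct_mulVec_pos hp
  have hKu : (B *ᵥ u) ⬝ᵥ (M⁻¹ *ᵥ (B *ᵥ u)) ≤ CK * s := by
    have h := dotProduct_mul_mul_transpose_mulVec Bᵀ M⁻¹ u
    rw [transpose_transpose] at h
    rw [← h, hs, dotProduct_comm v, ← hAu]
    exact hKorn u
  have hsq : s ^ 2 ≤ s * (CK * (p ⬝ᵥ (M *ᵥ p))) :=
    calc s ^ 2 = (p ⬝ᵥ (B *ᵥ u)) ^ 2 := by rw [hs, dotProduct_mulVec p, ← mulVec_transpose]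
      _ ≤ (p ⬝ᵥ (M *ᵥ p)) * ((B *ᵥ u) ⬝ᵥ (M⁻¹ *ᵥ (B *ᵥ u))) := hM.sq_dotProduct_le p (B *ᵥ u)
      _ ≤ (p ⬝ᵥ (M *ᵥ p)) * (CK * s) := by
        gcongr
        simpa using hM.posSemidef.dotProduct_mulVec_nonneg p
      _ = s * (CK * (p ⬝ᵥ (M *ᵥ p))) := by ring
  exact le_of_mul_le_mul_left (by rwa [← sq]) hs_pos

theorem stmt19_general {m n : ℕ} (B : Matrix (Fin m) (Fin n) ℝ)
    (M : Matrix (Fin m) (Fin m) ℝ) (A₁ : Matrix (Fin n) (Fin n) ℝ)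
    (hM : M.PosDef) (hA : A₁.PosDef) (CK β : ℝ)
    (hKorn : ∀ u : Fin n → ℝ,
      u ⬝ᵥ ((Bᵀ * M⁻¹ * B) *ᵥ u) ≤ CK * (u ⬝ᵥ (A₁ *ᵥ u)))
    (hinfsup : ∀ p : Fin m → ℝ, (∀ q : Fin m → ℝ, Bᵀ *ᵥ q = 0 → p ⬝ᵥ q = 0) →
      β ^ 2 * (p ⬝ᵥ (M *ᵥ p)) ≤ p ⬝ᵥ ((B * A₁⁻¹ * Bᵀ) *ᵥ p)) :
    ∀ p : Fin m → ℝ, (∀ q : Fin m → ℝ, Bᵀ *ᵥ q = 0 → p ⬝ᵥ q = 0) →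
      β ^ 2 * (p ⬝ᵥ (M *ᵥ p)) ≤ p ⬝ᵥ ((B * A₁⁻¹ * Bᵀ) *ᵥ p) ∧
      p ⬝ᵥ ((B * A₁⁻¹ * Bᵀ) *ᵥ p) ≤ CK * (p ⬝ᵥ (M *ᵥ p)) := by
  intro p hp
  refine ⟨hinfsup p hp, ?_⟩
  by_cases hv : Bᵀ *ᵥ p = 0
  · obtain rfl : p = 0 := dotProduct_self_eq_zero.mp (hp p hv)
    simp
  · exact dotProduct_schur_le_of_korn B hM hA hKorn hv

/-- Two-sided spectral equivalence of the mass matrix and the pressure Schur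
complement: if `uᵀBᵀM⁻¹Bu ≤ C_K uᵀA₁u` for all `u` (discrete Korn inequality)
and `β² pᵀMp ≤ pᵀBA₁⁻¹Bᵀp` for all `p ⊥ Null(Bᵀ)` (inf-sup), then
`β² pᵀMp ≤ pᵀBA₁⁻¹Bᵀp ≤ C_K pᵀMp` for all `p ⊥ Null(Bᵀ)`. -/
theorem stmt19 {m n : ℕ} (B : Matrix (Fin m) (Fin n) ℝ)
    (M : Matrix (Fin m) (Fin m) ℝ) (A₁ : Matrix (Fin n) (Fin n) ℝ)
    (hM : M.PosDef) (hA : A₁.PosDef) (CK β : ℝ) (hβ : 0 < β)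
    (hKorn : ∀ u : Fin n → ℝ,
      u ⬝ᵥ ((Bᵀ * M⁻¹ * B) *ᵥ u) ≤ CK * (u ⬝ᵥ (A₁ *ᵥ u)))
    (hinfsup : ∀ p : Fin m → ℝ, (∀ q : Fin m → ℝ, Bᵀ *ᵥ q = 0 → p ⬝ᵥ q = 0) →
      β ^ 2 * (p ⬝ᵥ (M *ᵥ p)) ≤ p ⬝ᵥ ((B * A₁⁻¹ * Bᵀ) *ᵥ p)) :
    ∀ p : Fin m → ℝ, (∀ q : Fin m → ℝ, Bᵀ *ᵥ q = 0 → p ⬝ᵥ q = 0) →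
      β ^ 2 * (p ⬝ᵥ (M *ᵥ p)) ≤ p ⬝ᵥ ((B * A₁⁻¹ * Bᵀ) *ᵥ p) ∧
      p ⬝ᵥ ((B * A₁⁻¹ * Bᵀ) *ᵥ p) ≤ CK * (p ⬝ᵥ (M *ᵥ p)) :=
  stmt19_general B M A₁ hM hA CK β hKorn hinfsup
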